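/- arXiv:2305.15177 — 3 statements merged into one kernel-verified Lean document; each statement's English description precedes it below -/
import Mathlib

section
/- Let N, p be fixed, X ∈ ℝ^{N×p}, Y ∈ ℝ^N, λ > 0 and η ∈ (0,1). For each positive integer m let β̂^(m) be the unique global minimizer of the smooth Elastic-net criterion L_m, and let β̂_opt be the unique global minimizer of the Elastic-net criterion L. Then β̂^(m) converges to β̂_opt as m → ∞. -/
open scoped BigOperators

/-- The α-absolute function: `|x|_α = (1/α)[log(1+exp(−αx)) + log(1+exp(αx))]`. -/
noncomputable def alphaAbs (α x : ℝ) : ℝ :=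
  (1 / α) * (Real.log (1 + Real.exp (-(α * x))) + Real.log (1 + Real.exp (α * x)))

/-- The Elastic-net criterion
`L(β) = ½‖Y − Xβ‖² + λ(½(1−η)‖β‖₂² + η‖β‖₁)`,
where the rows of `X` are `x_1ᵀ,…,x_Nᵀ`. -/
noncomputable def elasticNet {N p : ℕ} (X : Fin N → EuclideanSpace ℝ (Fin p))
    (Y : Fin N → ℝ) (lam eta : ℝ) (β : EuclideanSpace ℝ (Fin p)) : ℝ :=
  (1 / 2) * ∑ n, (Y n - ∑ j, X n j * β j) ^ 2 +
    lam * ((1 - eta) / 2 * ‖β‖ ^ 2 + eta * ∑ j, |β j|)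

/-- The smooth Elastic-net criterion
`L_α(β) = ½‖Y − Xβ‖² + λ(½(1−η)‖β‖₂² + η∑_j |β_j|_α)`. -/
noncomputable def smoothElasticNet {N p : ℕ} (X : Fin N → EuclideanSpace ℝ (Fin p))
    (Y : Fin N → ℝ) (lam eta α : ℝ) (β : EuclideanSpace ℝ (Fin p)) : ℝ :=
  (1 / 2) * ∑ n, (Y n - ∑ j, X n j * β j) ^ 2 +
    lam * ((1 - eta) / 2 * ‖β‖ ^ 2 + eta * ∑ j, alphaAbs α (β j))

private lemma log_one_add_exp_nonneg (u : ℝ) : 0 ≤ Real.log (1 + Real.exp u) :=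
  Real.log_nonneg (by linarith [Real.exp_pos u])

private lemma le_log_one_add_exp (u : ℝ) : u ≤ Real.log (1 + Real.exp u) := by
  calc u = Real.log (Real.exp u) := (Real.log_exp u).symm
  _ ≤ _ := Real.log_le_log (Real.exp_pos u) (by linarith)

private lemma log_one_add_exp_le (u : ℝ) :
    Real.log (1 + Real.exp u) ≤ Real.log 2 + max u 0 := by
  rcases le_total u 0 with h | h
  · have h1 : Real.exp u ≤ 1 := Real.exp_le_one_iff.mpr h
    have h2 : Real.log (1 + Real.exp u) ≤ Real.log 2 :=
      Real.log_le_log (by positivity) (by linarith)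
    rw [max_eq_right h]
    linarith
  · have h1 : (1:ℝ) ≤ Real.exp u := Real.one_le_exp h
    have h2 : Real.log (1 + Real.exp u) ≤ Real.log (2 * Real.exp u) :=
      Real.log_le_log (by positivity) (by linarith)
    rw [max_eq_left h]
    rw [Real.log_mul (by norm_num) (Real.exp_ne_zero u), Real.log_exp] at h2
    linarith

private lemma abs_le_alphaAbs (α x : ℝ) (hα : 0 < α) : |x| ≤ alphaAbs α x := by
  have hA := le_log_one_add_exp (-(α * x))
  have hB := le_log_one_add_exp (α * x)
  have hA0 := log_one_add_exp_nonneg (-(α * x))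
  have hB0 := log_one_add_exp_nonneg (α * x)
  have habs : α * |x| ≤ Real.log (1 + Real.exp (-(α * x))) + Real.log (1 + Real.exp (α * x)) := by
    have h : |α * x| ≤ Real.log (1 + Real.exp (-(α * x))) + Real.log (1 + Real.exp (α * x)) :=
      abs_le.mpr ⟨by linarith, by linarith⟩
    rwa [abs_mul, abs_of_pos hα] at h
  have h2 : (1/α) * (α * |x|) ≤
      (1/α) * (Real.log (1 + Real.exp (-(α * x))) + Real.log (1 + Real.exp (α * x))) :=
    mul_le_mul_of_nonneg_left habs (by positivity)
  rw [alphaAbs]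
  calc |x| = (1/α) * (α * |x|) := by field_simp
  _ ≤ _ := h2

private lemma alphaAbs_le (α x : ℝ) (hα : 0 < α) :
    alphaAbs α x ≤ |x| + 2 * Real.log 2 / α := by
  have hA := log_one_add_exp_le (-(α * x))
  have hB := log_one_add_exp_le (α * x)
  have hmax : max (-(α * x)) 0 + max (α * x) 0 = |α * x| := by
    rcases le_total (α * x) 0 with h | h
    · rw [abs_of_nonpos h, max_eq_left (by linarith), max_eq_right h]; ring
    · rw [abs_of_nonneg h, max_eq_right (by linarith), max_eq_left h]; ring
  have habs : |α * x| = α * |x| := by rw [abs_mul, abs_of_pos hα]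
  have hsum : Real.log (1 + Real.exp (-(α * x))) + Real.log (1 + Real.exp (α * x))
      ≤ 2 * Real.log 2 + α * |x| := by linarith
  have h2 : (1/α) * (Real.log (1 + Real.exp (-(α * x))) + Real.log (1 + Real.exp (α * x)))
      ≤ (1/α) * (2 * Real.log 2 + α * |x|) :=
    mul_le_mul_of_nonneg_left hsum (by positivity)
  rw [alphaAbs]
  calc (1/α) * (Real.log (1 + Real.exp (-(α * x))) + Real.log (1 + Real.exp (α * x)))
      ≤ (1/α) * (2 * Real.log 2 + α * |x|) := h2
  _ = |x| + 2 * Real.log 2 / α := by field_simp; ring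

/-- Strong convexity-type inequality for the elastic net at its strict minimizer. -/
private lemma elasticNet_strong_min {N p : ℕ} (X : Fin N → EuclideanSpace ℝ (Fin p))
    (Y : Fin N → ℝ) (lam eta : ℝ) (hlam : 0 < lam) (heta : eta ∈ Set.Ioo (0 : ℝ) 1)
    (βopt : EuclideanSpace ℝ (Fin p))
    (hopt : ∀ β : EuclideanSpace ℝ (Fin p), β ≠ βopt →
      elasticNet X Y lam eta βopt < elasticNet X Y lam eta β)
    (β : EuclideanSpace ℝ (Fin p)) :
    lam * (1 - eta) / 4 * ‖β - βopt‖ ^ 2 ≤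
      elasticNet X Y lam eta β - elasticNet X Y lam eta βopt := by
  set μ : EuclideanSpace ℝ (Fin p) := (1/2 : ℝ) • (β + βopt) with hμdef
  have hμj : ∀ j, μ j = (β j + βopt j) / 2 := by
    intro j
    simp [hμdef]
    ring
  -- fit term
  have hfit : ∑ n, (Y n - ∑ j, X n j * μ j) ^ 2 ≤
      (∑ n, (Y n - ∑ j, X n j * β j) ^ 2 + ∑ n, (Y n - ∑ j, X n j * βopt j) ^ 2) / 2 := by
    have hterm : ∀ n, (Y n - ∑ j, X n j * μ j) ^ 2 ≤
        ((Y n - ∑ j, X n j * β j) ^ 2 + (Y n - ∑ j, X n j * βopt j) ^ 2) / 2 := by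
      intro n
      have hinner : ∑ j, X n j * μ j = (∑ j, X n j * β j + ∑ j, X n j * βopt j) / 2 := by
        rw [← Finset.sum_add_distrib, Finset.sum_div]
        exact Finset.sum_congr rfl fun j _ => by rw [hμj j]; ring
      rw [hinner]
      nlinarith [sq_nonneg ((Y n - ∑ j, X n j * β j) - (Y n - ∑ j, X n j * βopt j))]
    calc ∑ n, (Y n - ∑ j, X n j * μ j) ^ 2
        ≤ ∑ n, (((Y n - ∑ j, X n j * β j) ^ 2 + (Y n - ∑ j, X n j * βopt j) ^ 2) / 2) :=
          Finset.sum_le_sum fun n _ => hterm n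
    _ = _ := by rw [← Finset.sum_div, Finset.sum_add_distrib]
  -- abs term
  have habs : ∑ j, |μ j| ≤ (∑ j, |β j| + ∑ j, |βopt j|) / 2 := by
    have hterm : ∀ j, |μ j| ≤ (|β j| + |βopt j|) / 2 := by
      intro j
      rw [hμj j]
      have h1 := abs_add_le (β j) (βopt j)
      have h2 : |(β j + βopt j) / 2| = |β j + βopt j| / 2 := by
        rw [abs_div, abs_two]
      linarith
    calc ∑ j, |μ j| ≤ ∑ j, ((|β j| + |βopt j|) / 2) := Finset.sum_le_sum fun j _ => hterm j
    _ = _ := by rw [← Finset.sum_div, Finset.sum_add_distrib]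
  -- norm term
  have hnorm : ‖μ‖ ^ 2 = (‖β‖ ^ 2 + ‖βopt‖ ^ 2) / 2 - ‖β - βopt‖ ^ 2 / 4 := by
    have hp := parallelogram_law_with_norm ℝ β βopt
    have h1 : ‖μ‖ = (1/2) * ‖β + βopt‖ := by
      rw [hμdef, norm_smul]
      norm_num
    simp only [pow_two]
    rw [h1]
    linarith
  -- minimizer inequality at the midpoint
  have hopt' : elasticNet X Y lam eta βopt ≤ elasticNet X Y lam eta μ := by
    by_cases h : μ = βopt
    · rw [h]
    · exact (hopt μ h).le
  have hnorm' : lam * ((1 - eta) / 2 * ‖μ‖ ^ 2) =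
      lam * ((1 - eta) / 2 * ((‖β‖ ^ 2 + ‖βopt‖ ^ 2) / 2 - ‖β - βopt‖ ^ 2 / 4)) := by
    rw [hnorm]
  have habs' : lam * (eta * ∑ j, |μ j|) ≤
      lam * (eta * ((∑ j, |β j| + ∑ j, |βopt j|) / 2)) :=
    mul_le_mul_of_nonneg_left (mul_le_mul_of_nonneg_left habs heta.1.le) hlam.le
  simp only [elasticNet] at hopt' ⊢
  nlinarith [hopt', hfit, habs', hnorm']

/-- (Theorem 1) Let `λ > 0`, `η ∈ (0,1)`. For each positive integer `m` let `β̂^(m)` be the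
unique global minimizer of the smooth Elastic-net criterion `L_m`, and let `β̂_opt` be the
unique global minimizer of the Elastic-net criterion `L`. Then `β̂^(m) → β̂_opt` as `m → ∞`. -/
theorem smooth_minimizers_tendsto_elasticNet_minimizer
    {N p : ℕ} (X : Fin N → EuclideanSpace ℝ (Fin p)) (Y : Fin N → ℝ)
    (lam eta : ℝ) (hlam : 0 < lam) (heta : eta ∈ Set.Ioo (0 : ℝ) 1)
    (βopt : EuclideanSpace ℝ (Fin p))
    (hopt : ∀ β : EuclideanSpace ℝ (Fin p), β ≠ βopt →
      elasticNet X Y lam eta βopt < elasticNet X Y lam eta β)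
    (βm : ℕ → EuclideanSpace ℝ (Fin p))
    (hβm : ∀ m : ℕ, 1 ≤ m → ∀ β : EuclideanSpace ℝ (Fin p), β ≠ βm m →
      smoothElasticNet X Y lam eta (m : ℝ) (βm m) < smoothElasticNet X Y lam eta (m : ℝ) β) :
    Filter.Tendsto βm Filter.atTop (nhds βopt) := by
  obtain ⟨heta1, heta2⟩ := heta
  have hlog2 : (0:ℝ) ≤ Real.log 2 := Real.log_nonneg (by norm_num)
  -- comparison of the two criteria
  have hle : ∀ (α : ℝ), 0 < α → ∀ β : EuclideanSpace ℝ (Fin p),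
      elasticNet X Y lam eta β ≤ smoothElasticNet X Y lam eta α β := by
    intro α hα β
    have hsum : ∑ j, |β j| ≤ ∑ j, alphaAbs α (β j) :=
      Finset.sum_le_sum fun j _ => abs_le_alphaAbs α (β j) hα
    have := mul_le_mul_of_nonneg_left (mul_le_mul_of_nonneg_left hsum heta1.le) hlam.le
    simp only [elasticNet, smoothElasticNet]
    nlinarith [this]
  have hle2 : ∀ (α : ℝ), 0 < α → ∀ β : EuclideanSpace ℝ (Fin p),
      smoothElasticNet X Y lam eta α β ≤
        elasticNet X Y lam eta β + lam * eta * p * (2 * Real.log 2 / α) := by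
    intro α hα β
    have hsum : ∑ j, alphaAbs α (β j) ≤ ∑ j, (|β j| + 2 * Real.log 2 / α) :=
      Finset.sum_le_sum fun j _ => alphaAbs_le α (β j) hα
    rw [Finset.sum_add_distrib, Finset.sum_const, Finset.card_univ, Fintype.card_fin,
      nsmul_eq_mul] at hsum
    have := mul_le_mul_of_nonneg_left (mul_le_mul_of_nonneg_left hsum heta1.le) hlam.le
    simp only [elasticNet, smoothElasticNet]
    nlinarith [this]
  -- bound on the excess loss of βm m
  have bound : ∀ m : ℕ, 1 ≤ m →
      elasticNet X Y lam eta (βm m) ≤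
        elasticNet X Y lam eta βopt + lam * eta * p * (2 * Real.log 2 / m) := by
    intro m hm
    have hmpos : (0:ℝ) < m := by exact_mod_cast hm
    have h1 := hle m hmpos (βm m)
    have h2 : smoothElasticNet X Y lam eta (m:ℝ) (βm m) ≤
        smoothElasticNet X Y lam eta (m:ℝ) βopt := by
      by_cases h : βopt = βm m
      · rw [h]
      · exact (hβm m hm βopt h).le
    have h3 := hle2 m hmpos βopt
    linarith
  -- strong convexity
  have key := elasticNet_strong_min X Y lam eta hlam ⟨heta1, heta2⟩ βopt hopt
  set K : ℝ := 8 * eta * p * Real.log 2 / (1 - eta) with hK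
  have hKnonneg : 0 ≤ K := by
    apply div_nonneg
    · positivity
    · linarith
  have sq_bound : ∀ m : ℕ, 1 ≤ m → ‖βm m - βopt‖ ^ 2 ≤ K / m := by
    intro m hm
    have hmpos : (0:ℝ) < m := by exact_mod_cast hm
    have h1 := key (βm m)
    have h2 := bound m hm
    have h1e : (1:ℝ) - eta ≠ 0 := by linarith
    have hm0 : (m:ℝ) ≠ 0 := ne_of_gt hmpos
    have heq : lam * (1 - eta) / 4 * (K / m) = lam * eta * p * (2 * Real.log 2 / m) := by
      rw [hK]
      field_simp
      ring
    have h3 : lam * (1 - eta) / 4 * ‖βm m - βopt‖ ^ 2 ≤ lam * (1 - eta) / 4 * (K / m) := by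
      rw [heq]; linarith
    have hc : (0:ℝ) < lam * (1 - eta) / 4 := by
      have : (0:ℝ) < 1 - eta := by linarith
      positivity
    exact le_of_mul_le_mul_left h3 hc
  -- conclude convergence
  rw [tendsto_iff_dist_tendsto_zero]
  have hg : Filter.Tendsto (fun m : ℕ => Real.sqrt (K / m)) Filter.atTop (nhds 0) := by
    simpa using (tendsto_const_div_atTop_nhds_zero_nat K).sqrt
  refine squeeze_zero' (Filter.Eventually.of_forall fun m => dist_nonneg) ?_ hg
  filter_upwards [Filter.eventually_ge_atTop 1] with m hm
  have hmpos : (0:ℝ) < m := by exact_mod_cast hm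
  rw [dist_eq_norm]
  rw [Real.le_sqrt (norm_nonneg _) (div_nonneg hKnonneg hmpos.le)]
  exact sq_bound m hm
end

section
/- (Corollary 1) Suppose r_n ≠ 0 and x_n ≠ 0 for all n = 1,…,N, so that the pseudo-optimal subsampling probabilities π_n^{posp} := |r_n|·‖M⁻¹x_n‖ / ∑_{m=1}^N |r_m|·‖M⁻¹x_m‖ are strictly positive, and let π_n^{uni} := 1/N. Then tr(V(π^{uni})) ≥ tr(V(π^{posp})). -/
open scoped BigOperators

/-- Euclidean norm of a vector in `ℝ^p`. -/
noncomputable def euclidNorm {p : ℕ} (v : Fin p → ℝ) : ℝ := Real.sqrt (∑ j, v j ^ 2)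

/-- `V₀(π) = (1/(CN²))[∑_n π_n⁻¹ r_n² x_n x_nᵀ + c cᵀ + ∑_n r_n (c x_nᵀ + x_n cᵀ)]`. -/
noncomputable def V0 {N p : ℕ} (C : ℝ) (x : Fin N → Fin p → ℝ) (r : Fin N → ℝ)
    (c : Fin p → ℝ) (π : Fin N → ℝ) : Matrix (Fin p) (Fin p) ℝ :=
  (1 / (C * (N : ℝ) ^ 2)) •
    (∑ n, ((π n)⁻¹ * r n ^ 2) • Matrix.vecMulVec (x n) (x n) + Matrix.vecMulVec c c +
      ∑ n, r n • (Matrix.vecMulVec c (x n) + Matrix.vecMulVec (x n) c))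

/-- `V(π) = M⁻¹ V₀(π) M⁻¹`. -/
noncomputable def Vmat {N p : ℕ} (C : ℝ) (x : Fin N → Fin p → ℝ) (r : Fin N → ℝ)
    (c : Fin p → ℝ) (M : Matrix (Fin p) (Fin p) ℝ) (π : Fin N → ℝ) :
    Matrix (Fin p) (Fin p) ℝ :=
  M⁻¹ * V0 C x r c π * M⁻¹

/-!
Only the term `∑ₙ πₙ⁻¹ rₙ² xₙ xₙᵀ` of `V₀(π)` depends on `π`, and its contribution to the trace
of `V(π)` is `(1/(CN²)) ∑ₙ πₙ⁻¹ aₙ²` with `aₙ = |rₙ|·‖M⁻¹xₙ‖`. For `πₙ = aₙ / ∑ₘ aₘ` this sum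
is `(∑ₙ aₙ)²`, for `πₙ = 1/N` it is `N ∑ₙ aₙ²`, and Cauchy–Schwarz compares the two.
-/

open Matrix

theorem Matrix.trace_mul_vecMulVec_mul {R n : Type*} [Fintype n] [CommSemiring R]
    (A B : Matrix n n R) (u v : n → R) :
    trace (A * vecMulVec u v * B) = (A *ᵥ u) ⬝ᵥ (v ᵥ* B) := by
  rw [mul_vecMulVec, vecMulVec_mul, trace_vecMulVec]

theorem euclidNorm_sq {p : ℕ} (v : Fin p → ℝ) : euclidNorm v ^ 2 = v ⬝ᵥ v := by
  rw [euclidNorm, Real.sq_sqrt (Finset.sum_nonneg fun j _ => sq_nonneg (v j))]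
  simp only [dotProduct, sq]

theorem trace_inv_mul_vecMulVec_self_mul_inv {p : ℕ} {M : Matrix (Fin p) (Fin p) ℝ}
    (hM : M.IsHermitian) (u : Fin p → ℝ) :
    trace (M⁻¹ * vecMulVec u u * M⁻¹) = euclidNorm (M⁻¹ *ᵥ u) ^ 2 := by
  have hsymm : (M⁻¹)ᵀ = M⁻¹ := by
    simpa [conjTranspose_eq_transpose_of_trivial] using hM.inv.eq
  rw [trace_mul_vecMulVec_mul, euclidNorm_sq, ← vecMul_transpose, hsymm]

theorem trace_Vmat_le_trace_Vmat {N p : ℕ} (C : ℝ) (x : Fin N → Fin p → ℝ) (r : Fin N → ℝ)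
    (c : Fin p → ℝ) (M : Matrix (Fin p) (Fin p) ℝ) (hC : 0 ≤ C) (hM : M.IsHermitian)
    {π π' : Fin N → ℝ}
    (h : ∑ n, (π n)⁻¹ * (|r n| * euclidNorm (M⁻¹ *ᵥ x n)) ^ 2 ≤
      ∑ n, (π' n)⁻¹ * (|r n| * euclidNorm (M⁻¹ *ᵥ x n)) ^ 2) :
    trace (Vmat C x r c M π) ≤ trace (Vmat C x r c M π') := by
  have trace_eq : ∀ π : Fin N → ℝ, trace (Vmat C x r c M π) = (1 / (C * (N : ℝ) ^ 2)) *
      (∑ n, (π n)⁻¹ * (|r n| * euclidNorm (M⁻¹ *ᵥ x n)) ^ 2 +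
        trace (M⁻¹ * (vecMulVec c c +
          ∑ n, r n • (vecMulVec c (x n) + vecMulVec (x n) c)) * M⁻¹)) := by
    intro π
    rw [Vmat, V0, Matrix.mul_smul, Matrix.smul_mul, trace_smul, smul_eq_mul, add_assoc,
      Matrix.mul_add, Matrix.add_mul, trace_add, Finset.mul_sum, Finset.sum_mul, trace_sum]
    congr 3 with n
    rw [Matrix.mul_smul, Matrix.smul_mul, trace_smul, smul_eq_mul,
      trace_inv_mul_vecMulVec_self_mul_inv hM, mul_pow, sq_abs, mul_assoc]
  rw [trace_eq, trace_eq]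
  gcongr

theorem sum_inv_div_sum_mul_sq {ι : Type*} [Fintype ι] (a : ι → ℝ) :
    ∑ i, (a i / ∑ j, a j)⁻¹ * a i ^ 2 = (∑ i, a i) ^ 2 := by
  have term_eq : ∀ i, (a i / ∑ j, a j)⁻¹ * a i ^ 2 = (∑ j, a j) * a i := fun i => by
    rw [inv_div]
    rcases eq_or_ne (a i) 0 with hzero | hne
    · simp [hzero]
    · field_simp
  rw [Finset.sum_congr rfl fun i _ => term_eq i, ← Finset.mul_sum, sq]

theorem sum_inv_div_sum_mul_sq_le_card_mul_sum_sq {ι : Type*} [Fintype ι] (a : ι → ℝ) :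
    ∑ i, (a i / ∑ j, a j)⁻¹ * a i ^ 2 ≤ ∑ i, (1 / (Fintype.card ι : ℝ))⁻¹ * a i ^ 2 := by
  rw [sum_inv_div_sum_mul_sq, one_div, inv_inv, ← Finset.mul_sum]
  exact sq_sum_le_card_mul_sum_sq

theorem trace_V_uniform_ge_trace_V_posp_general
    {N p : ℕ} (C : ℝ) (hC : 0 < C)
    (x : Fin N → Fin p → ℝ) (r : Fin N → ℝ) (c : Fin p → ℝ)
    (M : Matrix (Fin p) (Fin p) ℝ) (hM : M.PosDef) :
    Matrix.trace (Vmat C x r c M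
        (fun n => |r n| * euclidNorm (M⁻¹.mulVec (x n)) /
          ∑ m, |r m| * euclidNorm (M⁻¹.mulVec (x m)))) ≤
      Matrix.trace (Vmat C x r c M (fun _ => 1 / (N : ℝ))) := by
  apply trace_Vmat_le_trace_Vmat C x r c M hC.le hM.isHermitian
  simpa using sum_inv_div_sum_mul_sq_le_card_mul_sum_sq
    fun n => |r n| * euclidNorm (M⁻¹ *ᵥ x n)

/-- (Corollary 1) If `r_n ≠ 0` and `x_n ≠ 0` for all `n`, so that the pseudo-optimal
subsampling probabilities `π_n^{posp} = |r_n|·‖M⁻¹x_n‖ / ∑_m |r_m|·‖M⁻¹x_m‖` are strictly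
positive, and `π_n^{uni} = 1/N`, then `tr(V(π^{uni})) ≥ tr(V(π^{posp}))`. -/
theorem trace_V_uniform_ge_trace_V_posp
    {N p : ℕ} (hN : 0 < N) (C : ℝ) (hC : 0 < C)
    (x : Fin N → Fin p → ℝ) (r : Fin N → ℝ) (c : Fin p → ℝ)
    (M : Matrix (Fin p) (Fin p) ℝ) (hM : M.PosDef)
    (hr : ∀ n, r n ≠ 0) (hx : ∀ n, x n ≠ 0) :
    Matrix.trace (Vmat C x r c M
        (fun n => |r n| * euclidNorm (M⁻¹.mulVec (x n)) /
          ∑ m, |r m| * euclidNorm (M⁻¹.mulVec (x m)))) ≤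
      Matrix.trace (Vmat C x r c M (fun _ => 1 / (N : ℝ))) :=
  trace_V_uniform_ge_trace_V_posp_general C hC x r c M hM
end

section
/- For every fixed x ∈ ℝ, the map α ↦ |x|_α is non-increasing on (0, ∞), and |x|_α ≥ |x| for all α > 0; consequently, for every β ∈ ℝ^p the smoothed norm ‖β‖_α := ∑_{j=1}^p |β_j|_α decreases monotonically to ‖β‖₁ as α → ∞. -/
open scoped BigOperators

lemma log_sum_eq (t : ℝ) :
    Real.log (1 + Real.exp (-t)) + Real.log (1 + Real.exp t)
      = |t| + 2 * Real.log (1 + Real.exp (-|t|)) := by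
  rcases le_total 0 t with h | h
  · rw [abs_of_nonneg h]
    have h1 : (1 : ℝ) + Real.exp t = Real.exp t * (1 + Real.exp (-t)) := by
      rw [mul_add, mul_one, ← Real.exp_add]
      simp [add_comm]
    rw [h1, Real.log_mul (Real.exp_ne_zero t) (by positivity), Real.log_exp]
    ring
  · rw [abs_of_nonpos h, neg_neg]
    have h1 : (1 : ℝ) + Real.exp (-t) = Real.exp (-t) * (1 + Real.exp t) := by
      rw [mul_add, mul_one, ← Real.exp_add]
      simp [add_comm]
    rw [h1, Real.log_mul (Real.exp_ne_zero _) (by positivity), Real.log_exp]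
    ring

lemma alphaAbs_eq {α : ℝ} (hα : 0 < α) (x : ℝ) :
    alphaAbs α x = |x| + (2 / α) * Real.log (1 + Real.exp (-(α * |x|))) := by
  unfold alphaAbs
  rw [log_sum_eq (α * x), abs_mul, abs_of_pos hα]
  field_simp

lemma log_term_nonneg (t : ℝ) : 0 ≤ Real.log (1 + Real.exp t) :=
  Real.log_nonneg (by linarith [Real.exp_pos t])

lemma alphaAbs_anti (x : ℝ) : AntitoneOn (fun α : ℝ => alphaAbs α x) (Set.Ioi 0) := by
  intro a ha b hb hab
  simp only [Set.mem_Ioi] at ha hb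
  simp only [alphaAbs_eq ha, alphaAbs_eq hb]
  have hab' : a * |x| ≤ b * |x| := mul_le_mul_of_nonneg_right hab (abs_nonneg x)
  have hL : Real.log (1 + Real.exp (-(b * |x|))) ≤ Real.log (1 + Real.exp (-(a * |x|))) := by
    have hexp : Real.exp (-(b * |x|)) ≤ Real.exp (-(a * |x|)) :=
      Real.exp_le_exp.mpr (neg_le_neg hab')
    exact Real.log_le_log (by positivity) (by linarith)
  have h2 : (2 : ℝ) / b ≤ 2 / a := by gcongr
  have := mul_le_mul h2 hL (log_term_nonneg _) (by positivity)
  linarith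

lemma alphaAbs_ge {α : ℝ} (hα : 0 < α) (x : ℝ) : |x| ≤ alphaAbs α x := by
  rw [alphaAbs_eq hα]
  have := log_term_nonneg (-(α * |x|))
  have h2 : (0:ℝ) < 2 / α := by positivity
  nlinarith

lemma alphaAbs_tendsto (x : ℝ) :
    Filter.Tendsto (fun α : ℝ => alphaAbs α x) Filter.atTop (nhds |x|) := by
  have hg : Filter.Tendsto (fun α : ℝ => (2 * Real.log 2) / α) Filter.atTop (nhds 0) :=
    Filter.Tendsto.div_atTop tendsto_const_nhds Filter.tendsto_id
  have h0 : Filter.Tendsto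
      (fun α : ℝ => (2 / α) * Real.log (1 + Real.exp (-(α * |x|)))) Filter.atTop (nhds 0) := by
    apply squeeze_zero' (g := fun α : ℝ => (2 * Real.log 2) / α)
    · filter_upwards [Filter.eventually_gt_atTop (0:ℝ)] with α hα
      have := log_term_nonneg (-(α * |x|))
      positivity
    · filter_upwards [Filter.eventually_gt_atTop (0:ℝ)] with α hα
      have hle : Real.exp (-(α * |x|)) ≤ 1 := by
        rw [Real.exp_le_one_iff]
        have : 0 ≤ α * |x| := by positivity
        linarith
      have hL : Real.log (1 + Real.exp (-(α * |x|))) ≤ Real.log 2 := by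
        have h12 : (1:ℝ) + Real.exp (-(α * |x|)) ≤ 2 := by linarith
        exact Real.log_le_log (by positivity) h12
      have h2 : (0:ℝ) ≤ 2 / α := by positivity
      have := mul_le_mul_of_nonneg_left hL h2
      calc (2 / α) * Real.log (1 + Real.exp (-(α * |x|)))
          ≤ (2 / α) * Real.log 2 := this
        _ = (2 * Real.log 2) / α := by ring
    · exact hg
  have h : Filter.Tendsto
      (fun α : ℝ => |x| + (2 / α) * Real.log (1 + Real.exp (-(α * |x|))))
      Filter.atTop (nhds (|x| + 0)) := Filter.Tendsto.const_add _ h0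
  rw [add_zero] at h
  apply h.congr'
  filter_upwards [Filter.eventually_gt_atTop (0:ℝ)] with α hα
  exact (alphaAbs_eq hα x).symm

/-- For every fixed `x ∈ ℝ`, the map `α ↦ |x|_α` is non-increasing on `(0,∞)` and
`|x|_α ≥ |x|` for all `α > 0`; consequently, for every `β ∈ ℝ^p` the smoothed norm
`‖β‖_α = ∑_j |β_j|_α` decreases monotonically to `‖β‖₁` as `α → ∞`. -/
theorem alphaAbs_antitone_and_tendsto
    (x : ℝ) {p : ℕ} (β : Fin p → ℝ) :
    AntitoneOn (fun α : ℝ => alphaAbs α x) (Set.Ioi 0) ∧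
    (∀ α : ℝ, 0 < α → |x| ≤ alphaAbs α x) ∧
    AntitoneOn (fun α : ℝ => ∑ j, alphaAbs α (β j)) (Set.Ioi 0) ∧
    Filter.Tendsto (fun α : ℝ => ∑ j, alphaAbs α (β j)) Filter.atTop
      (nhds (∑ j, |β j|)) := by
  refine ⟨alphaAbs_anti x, fun α hα => alphaAbs_ge hα x, ?_, ?_⟩
  · intro a ha b hb hab
    exact Finset.sum_le_sum fun j _ => alphaAbs_anti (β j) ha hb hab
  · exact tendsto_finset_sum _ fun j _ => alphaAbs_tendsto (β j)
end
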